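/- arXiv:physics/0611050 — 7 statements merged into one kernel-verified Lean document; each statement's English description precedes it below -/
import Mathlib

section
/- Let m > 0 and M > 0, and let g : [0,∞) → ℝ be a C³ solution of g''' + ((m+1)/2)·g·g'' + m·(1 - (g')²) + M·(1 - g') = 0 with g'(0) = 1, g''(0) > 0, and lim_{t→∞} g'(t) = 1. Then a contradiction arises; i.e., no such solution exists. -/
/-!
Since `g''(0) > 0`, `g'` exceeds `1` somewhere, and since `g' → 1` it attains a maximum over
`[0, ∞)` at some `t₀ > 0` with `g'(t₀) > 1`. There `g''(t₀) = 0` and `g'''(t₀) ≤ 0`, whereas the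
equation gives `g'''(t₀) = m (g'(t₀)² - 1) + M (g'(t₀) - 1) > 0`.
-/

open Filter Set Topology

theorem IsLocalMax.deriv_deriv_nonpos {f : ℝ → ℝ} {x : ℝ} (h : IsLocalMax f x)
    (hc : ContinuousAt f x) : deriv (deriv f) x ≤ 0 := by
  by_contra! hpos
  have hmin : IsLocalMin f x := isLocalMin_of_deriv_deriv_pos hpos h.deriv_eq_zero hc
  have hconst : f =ᶠ[𝓝 x] fun _ => f x := by
    filter_upwards [h, hmin] with y hle hge using le_antisymm hle hge
  have hderiv : deriv f =ᶠ[𝓝 x] fun _ => 0 := by simpa using hconst.deriv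
  simp [hderiv.deriv_eq] at hpos

theorem HasDerivAt.exists_gt_of_pos {f : ℝ → ℝ} {f' x : ℝ} (hf : HasDerivAt f f' x)
    (hf' : 0 < f') : ∃ y > x, f x < f y := by
  have hslope : ∀ᶠ y in 𝓝[>] x, 0 < slope f x y :=
    ((hasDerivAt_iff_tendsto_slope.mp hf).mono_left (nhdsGT_le_nhdsNE x)).eventually
      (eventually_gt_nhds hf')
  obtain ⟨y, hy, hxy⟩ := (hslope.and self_mem_nhdsWithin).exists
  exact ⟨y, hxy, (slope_pos_iff_of_le (le_of_lt hxy)).mp hy⟩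

theorem ContinuousOn.exists_isMaxOn_Ici_of_tendsto {f : ℝ → ℝ} {a b L : ℝ}
    (hf : ContinuousOn f (Ici a)) (hb : a ≤ b) (hfb : L < f b)
    (hlim : Tendsto f atTop (𝓝 L)) : ∃ x ∈ Ici a, IsMaxOn f (Ici a) x := by
  refine hf.exists_isMaxOn' isClosed_Ici hb ?_
  rw [cocompact_eq_atBot_atTop, inf_sup_right, (disjoint_atBot_principal_Ici a).eq_bot,
    bot_sup_eq]
  exact (hlim.eventually (eventually_le_nhds hfb)).filter_mono inf_le_left

theorem stmt_1 (m M : ℝ) (hm : 0 < m) (hM : 0 < M) (g : ℝ → ℝ)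
    (hg : ContDiff ℝ 3 g)
    (hode : ∀ t : ℝ, 0 ≤ t →
      deriv (deriv (deriv g)) t + (m + 1) / 2 * g t * deriv (deriv g) t
        + m * (1 - (deriv g t) ^ 2) + M * (1 - deriv g t) = 0)
    (h0 : deriv g 0 = 1) (h1 : 0 < deriv (deriv g) 0)
    (hlim : Tendsto (deriv g) atTop (nhds 1)) : False := by
  have hg' : ContDiff ℝ 2 (deriv g) := hg.deriv'
  obtain ⟨b, hb, hgb⟩ :=
    ((hg'.differentiable two_ne_zero).differentiableAt (x := 0)).hasDerivAt.exists_gt_of_pos h1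
  rw [h0] at hgb
  obtain ⟨t₀, ht₀, hmax⟩ :=
    hg'.continuous.continuousOn.exists_isMaxOn_Ici_of_tendsto hb.le hgb hlim
  have hgt : 1 < deriv g t₀ := hgb.trans_le (hmax hb.le)
  have ht₀pos : 0 < t₀ := ht₀.lt_of_ne (by rintro rfl; linarith)
  have hloc : IsLocalMax (deriv g) t₀ := hmax.isLocalMax (Ici_mem_nhds ht₀pos)
  have hg''' := hloc.deriv_deriv_nonpos hg'.continuous.continuousAt
  have hode₀ := hode t₀ ht₀
  rw [hloc.deriv_eq_zero] at hode₀
  have hforcing : 0 < m * (deriv g t₀ ^ 2 - 1) + M * (deriv g t₀ - 1) := by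
    nlinarith [mul_pos hm (sub_pos.mpr hgt), mul_pos hM (sub_pos.mpr hgt)]
  linarith
end

section
/- Let f be a C³ solution of f''' + ((m+1)/2)·f·f'' + m·(1 - (f')²) + M·(1 - f') = 0 on [0,∞) with m < 0 and M < -2m. If t₀ ≥ 0 satisfies f''(t₀) = 0 and f'''(t₀) ≥ 0, then -1 - M/m ≤ f'(t₀) ≤ 1. -/
theorem stmt_6 (m M : ℝ) (hm : m < 0) (hM : M < -2 * m) (f : ℝ → ℝ)
    (hf : ContDiff ℝ 3 f)
    (hode : ∀ t : ℝ, 0 ≤ t →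
      deriv (deriv (deriv f)) t + (m + 1) / 2 * f t * deriv (deriv f) t
        + m * (1 - (deriv f t) ^ 2) + M * (1 - deriv f t) = 0)
    (t₀ : ℝ) (ht₀ : 0 ≤ t₀) (h2 : deriv (deriv f) t₀ = 0)
    (h3 : 0 ≤ deriv (deriv (deriv f)) t₀) :
    -1 - M / m ≤ deriv f t₀ ∧ deriv f t₀ ≤ 1 := by
  have h := hode t₀ ht₀
  rw [h2] at h
  set y := deriv f t₀ with hy
  have key : m * (1 - y ^ 2) + M * (1 - y) ≤ 0 := by nlinarith
  have hd : M / m * m = M := div_mul_cancel₀ M (ne_of_lt hm)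
  have hb : -1 - M / m < 1 := by nlinarith
  constructor
  · by_contra hc
    push_neg at hc
    have h1 : y < 1 := lt_trans hc hb
    have hp : 0 < m * y + m + M := by nlinarith [mul_lt_mul_of_neg_left hc hm]
    nlinarith [mul_pos (by linarith : (0:ℝ) < 1 - y) hp]
  · by_contra hc
    push_neg at hc
    have h1 : -1 - M / m < y := lt_trans hb hc
    have hp : m * y + m + M < 0 := by nlinarith [mul_lt_mul_of_neg_left h1 hm]
    nlinarith [mul_pos_of_neg_of_neg (by linarith : 1 - y < 0) hp]
end

section
/- Let f be a C³ solution of f''' + ((m+1)/2)·f·f'' + m·(1 - (f')²) + M·(1 - f') = 0 on [0,∞) with m > 0 and M > -2m. If t₁ ≥ 0 satisfies f''(t₁) = 0 and f'''(t₁) ≤ 0, then -1 - M/m ≤ f'(t₁) ≤ 1. -/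
theorem stmt_7 (m M : ℝ) (hm : 0 < m) (hM : -2 * m < M) (f : ℝ → ℝ)
    (hf : ContDiff ℝ 3 f)
    (hode : ∀ t : ℝ, 0 ≤ t →
      deriv (deriv (deriv f)) t + (m + 1) / 2 * f t * deriv (deriv f) t
        + m * (1 - (deriv f t) ^ 2) + M * (1 - deriv f t) = 0)
    (t₁ : ℝ) (ht₁ : 0 ≤ t₁) (h2 : deriv (deriv f) t₁ = 0)
    (h3 : deriv (deriv (deriv f)) t₁ ≤ 0) :
    -1 - M / m ≤ deriv f t₁ ∧ deriv f t₁ ≤ 1 := by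
  have key := hode t₁ ht₁
  rw [h2] at key
  set y := deriv f t₁ with hy
  have hprod : (1 - y) * (m * y + m + M) ≥ 0 := by nlinarith [key]
  have h1 : y ≤ 1 := by
    by_contra hc
    push_neg at hc
    have hp : 0 < m * y + m + M := by nlinarith [mul_pos hm (show 0 < y - 1 by linarith)]
    nlinarith
  have h2' : -1 - M / m ≤ y := by
    by_contra hc
    push_neg at hc
    have hlt : m * y + m + M < 0 := by
      have : m * y < m * (-1 - M / m) := by exact (mul_lt_mul_iff_right₀ hm).mpr hc
      have hmm : m * (-1 - M / m) = -m - M := by field_simp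
      linarith [this, hmm ▸ this]
    have hy1 : y < 1 := by
      have h2d : (-2:ℝ) < M / m := by rwa [lt_div_iff₀ hm]
      linarith
    nlinarith
  exact ⟨h2', h1⟩
end

section
/- Let m = 0 and M > 0, and let f be a C³ solution of f''' + (1/2)·f·f'' + M·(1 - f') = 0 on [0,∞) with lim_{t→∞} f'(t) = 1. Then f'' cannot vanish at any point t₀ where f' has a strict local extremum; consequently f'' has constant sign, i.e. f is everywhere concave or everywhere convex. -/
/-! Write `g = f'`. At a critical point of `g` the equation reads `g'' = M (g - 1)`, so by the
second-derivative test `g` has no local maximum where `g > 1` and no local minimum where `g < 1`.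
Hence if `g` exceeds `g p` somewhere after `p`, then `g ≤ 1` on `[p, ∞)`: otherwise the maximum of
`g` over `[p, ∞)`, which exists because `g → 1`, would be a forbidden interior maximum.
Symmetrically, if `g` drops below `g p` after `p`, then `g ≥ 1` on `[p, ∞)`. Both a degenerate
strict extremum of `g` and a sign change of `g'` contradict these two facts. -/

open Filter Set Topology

/-- `u` has a strict local extremum at `t₀`. -/
def StrictLocalExtr (u : ℝ → ℝ) (t₀ : ℝ) : Prop :=
  (∃ ε > 0, ∀ s : ℝ, s ≠ t₀ → |s - t₀| < ε → u s < u t₀) ∨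
  (∃ ε > 0, ∀ s : ℝ, s ≠ t₀ → |s - t₀| < ε → u t₀ < u s)

theorem not_isLocalMax_of_deriv_deriv_pos {g : ℝ → ℝ} {x : ℝ} (hc : ContinuousAt g x)
    (hd : deriv g x = 0) (hdd : 0 < deriv (deriv g) x) : ¬IsLocalMax g x := by
  intro hmax
  have hconst : g =ᶠ[𝓝 x] fun _ ↦ g x :=
    eventuallyEq_of_isMinFilter_of_isMaxFilter (isLocalMin_of_deriv_deriv_pos hdd hd hc) hmax
  exact hdd.ne' (by rw [hconst.deriv.deriv_eq]; simp)

theorem exists_gt_apply_lt_of_deriv_pos {g : ℝ → ℝ} {x : ℝ} (h : 0 < deriv g x) :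
    ∃ y, x < y ∧ g x < g y := by
  have hslope := hasDerivAt_iff_tendsto_slope.mp
    (differentiableAt_of_deriv_ne_zero h.ne').hasDerivAt
  obtain ⟨y, hy, hxy⟩ := ((hslope.mono_left (nhdsGT_le_nhdsNE x)).eventually
    (eventually_gt_nhds h) |>.and self_mem_nhdsWithin).exists
  exact ⟨y, hxy, (slope_pos_iff_of_le hxy.le).mp hy⟩

theorem exists_gt_apply_lt_of_deriv_neg {g : ℝ → ℝ} {x : ℝ} (h : deriv g x < 0) :
    ∃ y, x < y ∧ g y < g x := by
  obtain ⟨y, hxy, hy⟩ := exists_gt_apply_lt_of_deriv_pos (g := -g) (by simpa [deriv.neg'] using h)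
  exact ⟨y, hxy, by simpa using hy⟩

theorem exists_isMaxOn_Ici_of_tendsto {g : ℝ → ℝ} {c p t : ℝ} (hg : ContinuousOn g (Ici p))
    (hlim : Tendsto g atTop (𝓝 c)) (ht : p ≤ t) (hct : c < g t) :
    ∃ x ∈ Ici p, IsMaxOn g (Ici p) x := by
  refine hg.exists_isMaxOn' isClosed_Ici ht ?_
  rw [cocompact_eq_atBot_atTop, inf_sup_right, eventually_sup, eventually_inf_principal,
    eventually_inf_principal]
  exact ⟨(eventually_lt_atBot p).mono fun x hx hpx ↦ absurd hpx (not_le.mpr hx),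
    (hlim.eventually (eventually_lt_nhds hct)).mono fun x hx _ ↦ hx.le⟩

theorem deriv_deriv_neg_eq_of_deriv_eq_zero {g : ℝ → ℝ} {M c a : ℝ}
    (hcrit : ∀ t, a ≤ t → deriv g t = 0 → deriv (deriv g) t = M * (g t - c)) :
    ∀ t, a ≤ t → deriv (-g) t = 0 → deriv (deriv (-g)) t = M * ((-g) t - -c) := by
  intro t ht hd
  simp only [deriv.neg', deriv.fun_neg', neg_eq_zero, Pi.neg_apply] at hd ⊢
  rw [hcrit t ht hd]
  ring

section CriticalPoints

variable {g : ℝ → ℝ} {M c a : ℝ} (hM : 0 < M) (hg : Continuous g)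
  (hcrit : ∀ t, a ≤ t → deriv g t = 0 → deriv (deriv g) t = M * (g t - c))
  (hlim : Tendsto g atTop (𝓝 c))
include hM hg hcrit hlim

theorem apply_le_of_apply_lt {p q t : ℝ} (ha : a ≤ p) (hpq : p ≤ q) (hgpq : g p < g q)
    (hpt : p ≤ t) : g t ≤ c := by
  by_contra! hct
  obtain ⟨x, hpx, hmax⟩ := exists_isMaxOn_Ici_of_tendsto hg.continuousOn hlim hpt hct
  have hpx : p < x := hpx.lt_of_ne fun h ↦ by
    linarith [isMaxOn_iff.mp hmax q hpq, h ▸ hgpq]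
  have hloc : IsLocalMax g x := hmax.isLocalMax (Ici_mem_nhds hpx)
  have hd : deriv g x = 0 := hloc.deriv_eq_zero
  have hdd : 0 < deriv (deriv g) x := by
    rw [hcrit x (ha.trans hpx.le) hd]
    exact mul_pos hM (by linarith [isMaxOn_iff.mp hmax t hpt])
  exact not_isLocalMax_of_deriv_deriv_pos hg.continuousAt hd hdd hloc

theorem le_apply_of_apply_lt {p q t : ℝ} (ha : a ≤ p) (hpq : p ≤ q) (hgqp : g q < g p)
    (hpt : p ≤ t) : c ≤ g t := by
  have := apply_le_of_apply_lt hM hg.neg (deriv_deriv_neg_eq_of_deriv_eq_zero hcrit) hlim.neg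
    ha hpq (by simpa using hgqp) hpt
  simpa using this

theorem deriv_ne_zero_of_strict_max {t₀ ε : ℝ} (ht₀ : a ≤ t₀) (hε : 0 < ε)
    (hmax : ∀ s, s ≠ t₀ → |s - t₀| < ε → g s < g t₀) : deriv g t₀ ≠ 0 := by
  intro hd
  rcases le_or_gt (g t₀) c with hle | hgt
  · have hs : g (t₀ + ε / 2) < g t₀ :=
      hmax _ (by linarith) (by rw [abs_of_pos] <;> linarith)
    have hpq : t₀ ≤ t₀ + ε / 2 := by linarith
    linarith [le_apply_of_apply_lt hM hg hcrit hlim ht₀ hpq hs hpq]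
  · have hloc : IsLocalMax g t₀ := Metric.eventually_nhds_iff.mpr ⟨ε, hε, fun s hs ↦ by
      rcases eq_or_ne s t₀ with rfl | hne
      · exact le_rfl
      · exact (hmax s hne (by rwa [← Real.dist_eq])).le⟩
    refine not_isLocalMax_of_deriv_deriv_pos hg.continuousAt hd ?_ hloc
    rw [hcrit t₀ ht₀ hd]
    exact mul_pos hM (by linarith)

theorem deriv_ne_zero_of_strictLocalExtr {t₀ : ℝ} (ht₀ : a ≤ t₀)
    (hextr : StrictLocalExtr g t₀) : deriv g t₀ ≠ 0 := by
  rcases hextr with ⟨ε, hε, hmax⟩ | ⟨ε, hε, hmin⟩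
  · exact deriv_ne_zero_of_strict_max hM hg hcrit hlim ht₀ hε hmax
  · have := deriv_ne_zero_of_strict_max hM hg.neg (deriv_deriv_neg_eq_of_deriv_eq_zero hcrit)
      hlim.neg ht₀ hε fun s hs hsε ↦ neg_lt_neg (hmin s hs hsε)
    simpa using this

theorem deriv_nonpos_or_nonneg :
    (∀ t, a ≤ t → deriv g t ≤ 0) ∨ (∀ t, a ≤ t → 0 ≤ deriv g t) := by
  by_contra! h
  obtain ⟨⟨b, hab, hb⟩, ⟨d, had, hd⟩⟩ := h
  obtain ⟨q, hbq, hgq⟩ := exists_gt_apply_lt_of_deriv_pos hb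
  obtain ⟨r, hdr, hgr⟩ := exists_gt_apply_lt_of_deriv_neg hd
  have below (t : ℝ) (ht : b ≤ t) : g t ≤ c :=
    apply_le_of_apply_lt hM hg hcrit hlim hab hbq.le hgq ht
  have above (t : ℝ) (ht : d ≤ t) : c ≤ g t :=
    le_apply_of_apply_lt hM hg hcrit hlim had hdr.le hgr ht
  rcases le_total b d with hbd | hdb
  · linarith [below d hbd, above r hdr.le]
  · linarith [above b hdb, below q hbq.le]

end CriticalPoints

theorem stmt_8 (M : ℝ) (hM : 0 < M) (f : ℝ → ℝ)
    (hf : ContDiff ℝ 3 f)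
    (hode : ∀ t : ℝ, 0 ≤ t →
      deriv (deriv (deriv f)) t + 1 / 2 * f t * deriv (deriv f) t
        + M * (1 - deriv f t) = 0)
    (hlim : Tendsto (deriv f) atTop (nhds 1)) :
    (∀ t₀ : ℝ, 0 ≤ t₀ → StrictLocalExtr (deriv f) t₀ →
      deriv (deriv f) t₀ ≠ 0) ∧
    ((∀ t : ℝ, 0 ≤ t → deriv (deriv f) t ≤ 0) ∨
     (∀ t : ℝ, 0 ≤ t → 0 ≤ deriv (deriv f) t)) := by
  have hg : Continuous (deriv f) := hf.continuous_deriv (by norm_num)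
  have hcrit (t : ℝ) (ht : 0 ≤ t) (hd : deriv (deriv f) t = 0) :
      deriv (deriv (deriv f)) t = M * (deriv f t - 1) := by
    linarith [hd ▸ hode t ht]
  exact ⟨fun t₀ ht₀ ↦ deriv_ne_zero_of_strictLocalExtr hM hg hcrit hlim ht₀,
    deriv_nonpos_or_nonneg hM hg hcrit hlim⟩
end

section
/- Let m ≤ -1, M ≤ -2m, a ∈ ℝ, b > 1. Then there is no C³ function f : [0,∞) → ℝ satisfying f''' + ((m+1)/2)·f·f'' + m·(1-(f')²) + M·(1-f') = 0 with f(0)=a, f'(0)=b, lim_{t→∞} f'(t)=1, f'' < 0 on [0,∞) (i.e., no concave solution exists). -/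
/-!
Since `f'' < 0` and `f' → 1`, the slope `f'` decreases strictly to `1`, so `f' > 1` and `f → ∞`.
For `x > 1` the assumptions on `m, M` give `m (1 - x²) + M (1 - x) ≥ -m (x - 1)² > 0`, and
`(m + 1)/2 · f · f''` is nonnegative once `f > 0`, so the equation forces `f''' < 0` near
infinity. Then `f''` stays below a negative constant and `f' → -∞`, contradicting `f' → 1`.
-/

open Filter Set

theorem tendsto_atTop_of_pos_le_deriv {g : ℝ → ℝ} (hg : Differentiable ℝ g) {T c : ℝ}
    (hc : 0 < c) (hderiv : ∀ t, T ≤ t → c ≤ deriv g t) : Tendsto g atTop atTop := by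
  have hlinear : ∀ t, T ≤ t → g T + c * (t - T) ≤ g t := fun t ht => by
    have := (convex_Ici T).mul_sub_le_image_sub_of_le_deriv hg.continuous.continuousOn
      hg.differentiableOn (fun x hx => hderiv x (interior_subset hx)) T self_mem_Ici t ht ht
    linarith
  refine tendsto_atTop_mono' _ (eventually_atTop.2 ⟨T, hlinear⟩) ?_
  exact tendsto_atTop_add_const_left _ _
    (Tendsto.const_mul_atTop hc (tendsto_atTop_add_const_right _ (-T) tendsto_id))

theorem tendsto_atBot_of_deriv_le_neg {g : ℝ → ℝ} (hg : Differentiable ℝ g) {T c : ℝ}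
    (hc : c < 0) (hderiv : ∀ t, T ≤ t → deriv g t ≤ c) : Tendsto g atTop atBot := by
  rw [← tendsto_neg_atTop_iff]
  refine tendsto_atTop_of_pos_le_deriv (T := T) hg.neg (neg_pos.2 hc) fun t ht => ?_
  rw [deriv.fun_neg]
  exact neg_le_neg (hderiv t ht)

theorem StrictAntiOn.lt_of_tendsto {g : ℝ → ℝ} {t₀ l : ℝ} (hg : StrictAntiOn g (Ici t₀))
    (hlim : Tendsto g atTop (nhds l)) {t : ℝ} (ht : t₀ ≤ t) : l < g t := by
  have hle : l ≤ g (t + 1) := le_of_tendsto hlim <| eventually_atTop.2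
    ⟨t + 1, fun s hs => hg.antitoneOn (mem_Ici.2 (by linarith)) (mem_Ici.2 (by linarith)) hs⟩
  exact hle.trans_lt (hg (mem_Ici.2 ht) (mem_Ici.2 (by linarith)) (by linarith))

theorem lt_zero_of_ode_eq_zero {m M F x y z : ℝ} (hm : m ≤ -1) (hM : M ≤ -2 * m)
    (hF : 0 ≤ F) (hx : 1 < x) (hy : y ≤ 0)
    (h : z + (m + 1) / 2 * F * y + m * (1 - x ^ 2) + M * (1 - x) = 0) : z < 0 := by
  have hFy : 0 ≤ (m + 1) / 2 * F * y :=
    mul_nonneg_of_nonpos_of_nonpos (mul_nonpos_of_nonpos_of_nonneg (by linarith) hF) hy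
  have hpoly : -m * (x - 1) ^ 2 ≤ m * (1 - x ^ 2) + M * (1 - x) := by nlinarith
  nlinarith

theorem stmt_12_general (m M a b : ℝ) (hm : m ≤ -1) (hM : M ≤ -2 * m) :
    ¬ ∃ f : ℝ → ℝ, ContDiff ℝ 3 f ∧
      (∀ t : ℝ, 0 ≤ t →
        deriv (deriv (deriv f)) t + (m + 1) / 2 * f t * deriv (deriv f) t
          + m * (1 - (deriv f t) ^ 2) + M * (1 - deriv f t) = 0) ∧
      f 0 = a ∧ deriv f 0 = b ∧ Tendsto (deriv f) atTop (nhds 1) ∧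
      (∀ t : ℝ, 0 ≤ t → deriv (deriv f) t < 0) := by
  rintro ⟨f, hf, hode, -, -, hlim, hconcave⟩
  have hf' : ContDiff ℝ 2 (deriv f) := hf.deriv'
  have hf'' : Differentiable ℝ (deriv (deriv f)) :=
    (hf'.deriv' (n := 1)).differentiable one_ne_zero
  have hslope : ∀ t, 0 ≤ t → 1 < deriv f t := fun t =>
    StrictAntiOn.lt_of_tendsto (strictAntiOn_of_deriv_neg (convex_Ici 0)
      hf'.continuous.continuousOn fun x hx => hconcave x (interior_subset hx)) hlim
  have hf_atTop : Tendsto f atTop atTop :=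
    tendsto_atTop_of_pos_le_deriv (hf.differentiable (by norm_num)) one_pos
      fun t ht => (hslope t ht).le
  obtain ⟨T, hT⟩ := eventually_atTop.1 <|
    (hf_atTop.eventually_gt_atTop 0).and (eventually_ge_atTop 0)
  have hthird : ∀ t, T ≤ t → deriv (deriv (deriv f)) t < 0 := fun t ht =>
    lt_zero_of_ode_eq_zero hm hM (hT t ht).1.le (hslope t (hT t ht).2)
      (hconcave t (hT t ht).2).le (hode t (hT t ht).2)
  have hf''_le : ∀ t, T ≤ t → deriv (deriv f) t ≤ deriv (deriv f) T := fun t ht =>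
    antitoneOn_of_deriv_nonpos (convex_Ici T) hf''.continuous.continuousOn hf''.differentiableOn
      (fun s hs => (hthird s (interior_subset hs)).le) self_mem_Ici ht ht
  exact not_tendsto_nhds_of_tendsto_atBot (tendsto_atBot_of_deriv_le_neg
    (hf'.differentiable (by norm_num)) (hconcave T (hT T le_rfl).2) hf''_le) 1 hlim

theorem stmt_12 (m M a b : ℝ) (hm : m ≤ -1) (hM : M ≤ -2 * m) (hb : 1 < b) :
    ¬ ∃ f : ℝ → ℝ, ContDiff ℝ 3 f ∧
      (∀ t : ℝ, 0 ≤ t →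
        deriv (deriv (deriv f)) t + (m + 1) / 2 * f t * deriv (deriv f) t
          + m * (1 - (deriv f t) ^ 2) + M * (1 - deriv f t) = 0) ∧
      f 0 = a ∧ deriv f 0 = b ∧ Tendsto (deriv f) atTop (nhds 1) ∧
      (∀ t : ℝ, 0 ≤ t → deriv (deriv f) t < 0) :=
  stmt_12_general m M a b hm hM
end

section
/- Let m ≤ -1, M ≤ -m(b+1), a ∈ ℝ, 0 ≤ b < 1. Then there is no C³ function f : [0,∞) → ℝ satisfying f''' + ((m+1)/2)·f·f'' + m·(1-(f')²) + M·(1-f') = 0 with f(0)=a, f'(0)=b, lim_{t→∞} f'(t)=1, and f'' > 0 on [0,∞) (i.e., no convex solution exists). -/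
open Filter Set

/-!
Since `f'' > 0`, `f'` increases from `b` to its limit `1`, so `b ≤ f' < 1`. Because `f' → 1`,
`f → ∞`, hence `f ≥ 0` beyond some `T`. There `(m+1)/2 · f f'' ≤ 0` and
`m(1 - f'^2) + M(1 - f') = (1 - f')(M + m(b+1)) + (1 - f') m (f' - b) ≤ 0`, so the equation
forces `f''' ≥ 0`. Then `f''` is nondecreasing on `[T, ∞)` with `f''(T) > 0`, so `f'` grows at
least linearly and cannot converge to `1`.
-/

theorem StrictMonoOn.lt_of_tendsto_atTop {α β : Type*} [LinearOrder α] [NoMaxOrder α]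
    [TopologicalSpace β] [Preorder β] [OrderClosedTopology β] {g : α → β} {a : α} {l : β}
    (hg : StrictMonoOn g (Ici a)) (hl : Tendsto g atTop (nhds l)) {x : α} (hx : a ≤ x) :
    g x < l := by
  have : Nonempty α := ⟨x⟩
  obtain ⟨y, hxy⟩ := exists_gt x
  have hyl : g y ≤ l := ge_of_tendsto hl <| (eventually_ge_atTop y).mono fun z hyz =>
    hg.monotoneOn (hx.trans hxy.le) (hx.trans (hxy.le.trans hyz)) hyz
  exact (hg hx (hx.trans hxy.le) hxy).trans_le hyl

theorem tendsto_atTop_of_eventually_le_deriv {g : ℝ → ℝ} (hg : Differentiable ℝ g) {c : ℝ}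
    (hc : 0 < c) (hderiv : ∀ᶠ x in atTop, c ≤ deriv g x) : Tendsto g atTop atTop := by
  obtain ⟨T, hT⟩ := eventually_atTop.1 hderiv
  have hlin : ∀ x, T ≤ x → c * (x - T) ≤ g x - g T :=
    fun x hx => (convex_Ici T).mul_sub_le_image_sub_of_le_deriv hg.continuous.continuousOn
      hg.differentiableOn (fun y hy => hT y (interior_subset hy)) T self_mem_Ici x hx hx
  have hlim : Tendsto (fun x => g T + c * (x - T)) atTop atTop :=
    tendsto_atTop_add_const_left _ _ <|
      (tendsto_atTop_add_const_right _ _ tendsto_id).const_mul_atTop hc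
  exact tendsto_atTop_mono' atTop ((eventually_ge_atTop T).mono fun x hx => by
    linarith [hlin x hx]) hlim

theorem tendsto_atTop_of_monotoneOn_deriv {g : ℝ → ℝ} (hg : Differentiable ℝ g) {T : ℝ}
    (hmono : MonotoneOn (deriv g) (Ici T)) (hpos : 0 < deriv g T) : Tendsto g atTop atTop :=
  tendsto_atTop_of_eventually_le_deriv hg hpos <|
    (eventually_ge_atTop T).mono fun _ hx => hmono self_mem_Ici hx hx

theorem mul_one_sub_sq_add_mul_one_sub_nonpos {m M b x : ℝ} (hm : m ≤ 0)
    (hM : M ≤ -m * (b + 1)) (hbx : b ≤ x) (hx : x ≤ 1) :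
    m * (1 - x ^ 2) + M * (1 - x) ≤ 0 :=
  calc m * (1 - x ^ 2) + M * (1 - x)
      = (1 - x) * (M + m * (b + 1)) + (1 - x) * (m * (x - b)) := by ring
    _ ≤ 0 := add_nonpos
        (mul_nonpos_of_nonneg_of_nonpos (by linarith) (by linarith))
        (mul_nonpos_of_nonneg_of_nonpos (by linarith)
          (mul_nonpos_of_nonpos_of_nonneg hm (by linarith)))

theorem stmt_13_general (m M a b : ℝ) (hm : m ≤ -1) (hM : M ≤ -m * (b + 1)) :
    ¬ ∃ f : ℝ → ℝ, ContDiff ℝ 3 f ∧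
      (∀ t : ℝ, 0 ≤ t →
        deriv (deriv (deriv f)) t + (m + 1) / 2 * f t * deriv (deriv f) t
          + m * (1 - (deriv f t) ^ 2) + M * (1 - deriv f t) = 0) ∧
      f 0 = a ∧ deriv f 0 = b ∧ Tendsto (deriv f) atTop (nhds 1) ∧
      (∀ t : ℝ, 0 ≤ t → 0 < deriv (deriv f) t) := by
  rintro ⟨f, hf, hode, -, hb, hlim, hconvex⟩
  have hf₀ : Differentiable ℝ f := hf.differentiable (by norm_num)
  have hf₁ : Differentiable ℝ (deriv f) := (hf.iterate_deriv' 2 1).differentiable (by norm_num)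
  have hf₂ : Differentiable ℝ (deriv (deriv f)) :=
    (hf.iterate_deriv' 1 2).differentiable one_ne_zero
  have hmono : StrictMonoOn (deriv f) (Ici 0) :=
    strictMonoOn_of_deriv_pos (convex_Ici 0) hf₁.continuous.continuousOn fun t ht =>
      hconvex t (interior_subset ht)
  have hf_top : Tendsto f atTop atTop := tendsto_atTop_of_eventually_le_deriv hf₀
    one_half_pos (hlim.eventually (le_mem_nhds (by norm_num)))
  obtain ⟨T, hT⟩ := eventually_atTop.1 <|
    (eventually_ge_atTop 0).and (tendsto_atTop.1 hf_top 0)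
  have hf₃ : ∀ t ∈ Ici T, 0 ≤ deriv (deriv (deriv f)) t := fun t ht => by
    obtain ⟨ht₀, hft⟩ := hT t ht
    have hbt : b ≤ deriv f t := hb ▸ hmono.monotoneOn self_mem_Ici ht₀ ht₀
    have hpoly := mul_one_sub_sq_add_mul_one_sub_nonpos (by linarith) hM hbt
      (hmono.lt_of_tendsto_atTop hlim ht₀).le
    have hdamp : (m + 1) / 2 * f t * deriv (deriv f) t ≤ 0 := by
      rw [mul_assoc]
      exact mul_nonpos_of_nonpos_of_nonneg (by linarith) (mul_nonneg hft (hconvex t ht₀).le)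
    linarith [hode t ht₀]
  have hf'_top : Tendsto (deriv f) atTop atTop :=
    tendsto_atTop_of_monotoneOn_deriv hf₁
      (monotoneOn_of_deriv_nonneg (convex_Ici T) hf₂.continuous.continuousOn
        hf₂.differentiableOn fun t ht => hf₃ t (interior_subset ht))
      (hconvex T (hT T le_rfl).1)
  exact not_tendsto_nhds_of_tendsto_atTop hf'_top 1 hlim

theorem stmt_13 (m M a b : ℝ) (hm : m ≤ -1) (hM : M ≤ -m * (b + 1))
    (hb0 : 0 ≤ b) (hb1 : b < 1) :
    ¬ ∃ f : ℝ → ℝ, ContDiff ℝ 3 f ∧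
      (∀ t : ℝ, 0 ≤ t →
        deriv (deriv (deriv f)) t + (m + 1) / 2 * f t * deriv (deriv f) t
          + m * (1 - (deriv f t) ^ 2) + M * (1 - deriv f t) = 0) ∧
      f 0 = a ∧ deriv f 0 = b ∧ Tendsto (deriv f) atTop (nhds 1) ∧
      (∀ t : ℝ, 0 ≤ t → 0 < deriv (deriv f) t) :=
  stmt_13_general m M a b hm hM
end

section
/- Let m > -1, b > 1, and suppose (−1 < m ≤ 0 and M > −m(b+1)) or (m > 0 and M ≥ −2m). If f is a concave solution of f''' + ((m+1)/2)·f·f'' + m·(1−(f')²) + M·(1−f') = 0 with f(0)=a, f'(0)=b, f'(∞)=1, and f(t) − (t + l) → 0 as t → ∞ for some real l, then a < l < √(a² + 4(b−1)/(m+1)) and for all t ≥ 0, t + a ≤ f(t) ≤ t + l. -/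
/-!
Write `g = f - t` and `c = (m + 1) / 2`. Concavity makes `f'` decrease to `1`, so `g' = f' - 1 > 0`
and `g` increases from `a` to `l`; this gives `t + a ≤ f t ≤ t + l` and `a < l`.

For the upper bound on `l`, put `E = f'' + c g g'`. By the equation,
`E' = (f' - 1) (m (1 + f') + M) + c (f' - 1)² - c t f''`, which is positive on `t ≥ 0` under
the hypotheses on `m` and `M`. As `E` increases and `E < c g g' → 0`, `E` stays negative. But `E` is the
derivative of the energy `f' + (c / 2) g²`, which therefore decreases strictly from
`b + (c / 2) a²` to `1 + (c / 2) l²`.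
-/

open Filter Set Topology

section Limits

variable {α β : Type*} [LinearOrder α] [NoMaxOrder α] [LinearOrder β] [TopologicalSpace β]
  [OrderClosedTopology β] {g h : α → β} {a t : α} {L : β}

theorem StrictMonoOn.lt_of_eventuallyLE_of_tendsto (hg : StrictMonoOn g (Ici a))
    (hgh : g ≤ᶠ[atTop] h) (hh : Tendsto h atTop (𝓝 L)) (ht : a ≤ t) : g t < L := by
  have : Nonempty α := ⟨a⟩
  obtain ⟨s, hts⟩ := exists_gt t
  refine (hg ht (ht.trans hts.le) hts).trans_le (ge_of_tendsto hh ?_)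
  filter_upwards [hgh, eventually_ge_atTop s] with u hgu hsu
  exact (hg.monotoneOn (ht.trans hts.le) (ht.trans (hts.le.trans hsu)) hsu).trans hgu

theorem StrictMonoOn.lt_of_tendsto_atTop_s18 (hg : StrictMonoOn g (Ici a))
    (hL : Tendsto g atTop (𝓝 L)) (ht : a ≤ t) : g t < L :=
  hg.lt_of_eventuallyLE_of_tendsto EventuallyLE.rfl hL ht

theorem StrictAntiOn.lt_of_tendsto_atTop_s18 (hg : StrictAntiOn g (Ici a))
    (hL : Tendsto g atTop (𝓝 L)) (ht : a ≤ t) : L < g t :=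
  hg.dual_right.lt_of_tendsto_atTop_s18 hL ht

end Limits

section Derivatives

variable {g g' : ℝ → ℝ} {a : ℝ}

theorem strictMonoOn_Ici_of_hasDerivAt_pos (hg : ∀ t, HasDerivAt g (g' t) t)
    (hpos : ∀ t, a < t → 0 < g' t) : StrictMonoOn g (Ici a) :=
  strictMonoOn_of_hasDerivWithinAt_pos (convex_Ici a)
    (fun t _ => (hg t).continuousAt.continuousWithinAt) (fun t _ => (hg t).hasDerivWithinAt)
    (fun t ht => hpos t (by simpa using ht))

theorem strictAntiOn_Ici_of_hasDerivAt_neg (hg : ∀ t, HasDerivAt g (g' t) t)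
    (hneg : ∀ t, a < t → g' t < 0) : StrictAntiOn g (Ici a) :=
  strictAntiOn_of_hasDerivWithinAt_neg (convex_Ici a)
    (fun t _ => (hg t).continuousAt.continuousWithinAt) (fun t _ => (hg t).hasDerivWithinAt)
    (fun t ht => hneg t (by simpa using ht))

end Derivatives

section Energy

variable {m M : ℝ} {f : ℝ → ℝ}

theorem mul_one_add_add_pos_of_cases {b p : ℝ}
    (hcase : (-1 < m ∧ m ≤ 0 ∧ -m * (b + 1) < M) ∨ (0 < m ∧ -2 * m ≤ M))
    (hp : 1 < p) (hpb : p ≤ b) : 0 < m * (1 + p) + M := by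
  rcases hcase with ⟨-, hm, hM⟩ | ⟨hm, hM⟩
  · nlinarith [mul_nonneg (neg_nonneg.mpr hm) (sub_nonneg.mpr hpb)]
  · nlinarith

/-- With `x, p, q, r` standing for `f t, f' t, f'' t, f''' t`: the derivative of `energyDeriv`
rewritten by means of the equation. -/
theorem ode_energyDeriv_deriv_pos {t x p q r : ℝ}
    (hode : r + (m + 1) / 2 * x * q + m * (1 - p ^ 2) + M * (1 - p) = 0)
    (hm : -1 < m) (ht : 0 ≤ t) (hq : q < 0) (hp : 1 < p) (hcoef : 0 < m * (1 + p) + M) :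
    0 < r + (m + 1) / 2 * ((p - 1) ^ 2 + (x - t) * q) := by
  have hc : 0 < (m + 1) / 2 := by linarith
  calc 0 < (p - 1) * (m * (1 + p) + M) + (m + 1) / 2 * (p - 1) ^ 2 + (m + 1) / 2 * t * -q := by
        have h₁ := mul_pos (sub_pos.2 hp) hcoef
        have h₂ := mul_nonneg (mul_nonneg hc.le ht) (neg_nonneg.2 hq.le)
        exact add_pos_of_pos_of_nonneg (add_pos_of_pos_of_nonneg h₁ (by positivity)) h₂
    _ = r + (m + 1) / 2 * ((p - 1) ^ 2 + (x - t) * q) := by linear_combination -hode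

noncomputable def energy (m : ℝ) (f : ℝ → ℝ) (t : ℝ) : ℝ :=
  deriv f t + (m + 1) / 4 * (f t - t) ^ 2

noncomputable def energyDeriv (m : ℝ) (f : ℝ → ℝ) (t : ℝ) : ℝ :=
  deriv (deriv f) t + (m + 1) / 2 * ((f t - t) * (deriv f t - 1))

theorem hasDerivAt_energy (hf : Differentiable ℝ f) (hf' : Differentiable ℝ (deriv f)) (t : ℝ) :
    HasDerivAt (energy m f) (energyDeriv m f t) t := by
  have := (hf' t).hasDerivAt.add
    ((((hf t).hasDerivAt.sub (hasDerivAt_id t)).pow 2).const_mul ((m + 1) / 4))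
  exact this.congr_deriv (by simp only [energyDeriv, Pi.sub_apply, id, Nat.cast_ofNat]; ring)

theorem hasDerivAt_energyDeriv (hf : Differentiable ℝ f) (hf' : Differentiable ℝ (deriv f))
    (hf'' : Differentiable ℝ (deriv (deriv f))) (t : ℝ) :
    HasDerivAt (energyDeriv m f) (deriv (deriv (deriv f)) t
      + (m + 1) / 2 * ((deriv f t - 1) ^ 2 + (f t - t) * deriv (deriv f) t)) t := by
  have := (hf'' t).hasDerivAt.add ((((hf t).hasDerivAt.sub (hasDerivAt_id t)).mul
    ((hf' t).hasDerivAt.sub_const 1)).const_mul ((m + 1) / 2))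
  exact this.congr_deriv (by simp only [Pi.sub_apply, id]; ring)

theorem energyDeriv_neg {l : ℝ} (hm : -1 < m) (hf : ContDiff ℝ 3 f)
    (hode : ∀ t : ℝ, 0 ≤ t →
      deriv (deriv (deriv f)) t + (m + 1) / 2 * f t * deriv (deriv f) t
        + m * (1 - (deriv f t) ^ 2) + M * (1 - deriv f t) = 0)
    (hconc : ∀ t : ℝ, 0 ≤ t → deriv (deriv f) t < 0)
    (hf'_gt : ∀ t : ℝ, 0 ≤ t → 1 < deriv f t)
    (hcoef : ∀ t : ℝ, 0 ≤ t → 0 < m * (1 + deriv f t) + M)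
    (hlim : Tendsto (deriv f) atTop (𝓝 1)) (hg : Tendsto (fun t => f t - t) atTop (𝓝 l))
    {t : ℝ} (ht : 0 ≤ t) : energyDeriv m f t < 0 := by
  have hmono : StrictMonoOn (energyDeriv m f) (Ici 0) :=
    strictMonoOn_Ici_of_hasDerivAt_pos
      (hasDerivAt_energyDeriv (hf.differentiable (by norm_num))
        ((hf.iterate_deriv' 2 1).differentiable (by norm_num))
        ((hf.iterate_deriv' 1 2).differentiable one_ne_zero))
      fun s hs => ode_energyDeriv_deriv_pos (hode s hs.le) hm hs.le (hconc s hs.le)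
        (hf'_gt s hs.le) (hcoef s hs.le)
  have hφ : Tendsto (fun s => (m + 1) / 2 * ((f s - s) * (deriv f s - 1))) atTop (𝓝 0) := by
    simpa using (hg.mul (hlim.sub_const 1)).const_mul ((m + 1) / 2)
  refine hmono.lt_of_eventuallyLE_of_tendsto ?_ hφ ht
  filter_upwards [eventually_ge_atTop 0] with s hs
  simp only [energyDeriv]
  linarith [hconc s hs]

end Energy

theorem stmt_18_general (m M a b l : ℝ) (hm : -1 < m)
    (hcase : (-1 < m ∧ m ≤ 0 ∧ -m * (b + 1) < M) ∨ (0 < m ∧ -2 * m ≤ M))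
    (f : ℝ → ℝ) (hf : ContDiff ℝ 3 f)
    (hode : ∀ t : ℝ, 0 ≤ t →
      deriv (deriv (deriv f)) t + (m + 1) / 2 * f t * deriv (deriv f) t
        + m * (1 - (deriv f t) ^ 2) + M * (1 - deriv f t) = 0)
    (hconc : ∀ t : ℝ, 0 ≤ t → deriv (deriv f) t < 0)
    (h0 : f 0 = a) (h1 : deriv f 0 = b)
    (hlim : Tendsto (deriv f) atTop (nhds 1))
    (hl : Tendsto (fun t => f t - (t + l)) atTop (nhds 0)) :
    a < l ∧ l < Real.sqrt (a ^ 2 + 4 * (b - 1) / (m + 1)) ∧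
    ∀ t : ℝ, 0 ≤ t → t + a ≤ f t ∧ f t ≤ t + l := by
  have hf₁ : Differentiable ℝ f := hf.differentiable (by norm_num)
  have hf₂ : Differentiable ℝ (deriv f) := (hf.iterate_deriv' 2 1).differentiable (by norm_num)
  have hg : Tendsto (fun t => f t - t) atTop (𝓝 l) := by
    simpa [sub_add_eq_sub_sub] using hl.add_const l
  have hf'_anti : StrictAntiOn (deriv f) (Ici 0) :=
    strictAntiOn_Ici_of_hasDerivAt_neg (fun t => (hf₂ t).hasDerivAt) fun t ht => hconc t ht.le
  have hf'_gt : ∀ t : ℝ, 0 ≤ t → 1 < deriv f t := fun t ht => hf'_anti.lt_of_tendsto_atTop_s18 hlim ht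
  have hcoef : ∀ t : ℝ, 0 ≤ t → 0 < m * (1 + deriv f t) + M := fun t ht =>
    mul_one_add_add_pos_of_cases hcase (hf'_gt t ht) (h1 ▸ hf'_anti.antitoneOn self_mem_Ici ht ht)
  have hg_mono : StrictMonoOn (fun t => f t - t) (Ici 0) :=
    strictMonoOn_Ici_of_hasDerivAt_pos (fun t => (hf₁ t).hasDerivAt.sub (hasDerivAt_id t))
      fun t ht => sub_pos.2 (hf'_gt t ht.le)
  have hg_lt : ∀ t : ℝ, 0 ≤ t → f t - t < l := fun t ht => hg_mono.lt_of_tendsto_atTop_s18 hg ht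
  have henergy_anti : StrictAntiOn (energy m f) (Ici 0) :=
    strictAntiOn_Ici_of_hasDerivAt_neg (hasDerivAt_energy hf₁ hf₂) fun t ht =>
      energyDeriv_neg hm hf hode hconc hf'_gt hcoef hlim hg ht.le
  have henergy : 1 + (m + 1) / 4 * l ^ 2 < energy m f 0 :=
    henergy_anti.lt_of_tendsto_atTop_s18 (hlim.add ((hg.pow 2).const_mul _)) le_rfl
  simp only [energy, h0, h1, sub_zero] at henergy
  refine ⟨by simpa [h0] using hg_lt 0 le_rfl, Real.lt_sqrt_of_sq_lt ?_, fun t ht => ⟨?_, ?_⟩⟩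
  · have : l ^ 2 - a ^ 2 < 4 * (b - 1) / (m + 1) := by
      rw [lt_div_iff₀ (by linarith)]
      linarith
    linarith
  · have := hg_mono.monotoneOn self_mem_Ici ht ht
    simp only [h0, sub_zero] at this
    linarith
  · linarith [hg_lt t ht]

theorem stmt_18 (m M a b l : ℝ) (hm : -1 < m) (hb : 1 < b)
    (hcase : (-1 < m ∧ m ≤ 0 ∧ -m * (b + 1) < M) ∨ (0 < m ∧ -2 * m ≤ M))
    (f : ℝ → ℝ) (hf : ContDiff ℝ 3 f)
    (hode : ∀ t : ℝ, 0 ≤ t →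
      deriv (deriv (deriv f)) t + (m + 1) / 2 * f t * deriv (deriv f) t
        + m * (1 - (deriv f t) ^ 2) + M * (1 - deriv f t) = 0)
    (hconc : ∀ t : ℝ, 0 ≤ t → deriv (deriv f) t < 0)
    (h0 : f 0 = a) (h1 : deriv f 0 = b)
    (hlim : Tendsto (deriv f) atTop (nhds 1))
    (hl : Tendsto (fun t => f t - (t + l)) atTop (nhds 0)) :
    a < l ∧ l < Real.sqrt (a ^ 2 + 4 * (b - 1) / (m + 1)) ∧
    ∀ t : ℝ, 0 ≤ t → t + a ≤ f t ∧ f t ≤ t + l :=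
  stmt_18_general m M a b l hm hcase f hf hode hconc h0 h1 hlim hl
end
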